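/- arXiv:1810.07935 — 2 statements merged into one kernel-verified Lean document; each statement's English description precedes it below -/
import Mathlib

section
/- Let 0 < α < 1, T > 0, N ≥ 3, and let t_j be the graded mesh (3.1). Then for 4 ≤ j ≤ N there exists a constant C independent of N such that the sum over 4 ≤ k ≤ ⌈j/2⌉ of α·(t_j − t_k)^{α−1}·(Δt_k)^3·t_{k-1}^{2α−2} is at most C·N^{-2}. -/
/-!
For `3 ≤ i ≤ N` the mesh is `t i = t 2 + c * (i - 2) ^ (1 / α)` with
`c ^ (3 * α) ≤ T ^ (3 * α) / (N - 2) ^ 3`. The summand is homogeneous of total degree `3 * α`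
in `c`, and dropping `t 2 ≥ 0` from `t (k - 1)` only increases it, so it is at most
`c ^ (3 * α)` times the same expression for the mesh `i ↦ (i - 2) ^ (1 / α)`. That expression
is bounded by a constant depending on `α` only: there `2 k ≤ j + 1` keeps the gap
`t j - t k` above `t j / 2`, the mean value theorem gives `Δt_k ≤ (1 / α) (k - 2) ^ (1 / α - 1)`,
and `k - 2 ≤ 2 (k - 3)`, `k - 3 ≤ j - 2` make the remaining powers cancel. Summing at most
`N - 2` terms of size `O((N - 2) ^ (-3))` gives `O(N ^ (-2))`.
-/

open Real Finset

namespace Real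

lemma rpow_add_one_sub_rpow_le {p x : ℝ} (hp : 1 ≤ p) (hx : 0 ≤ x) :
    (x + 1) ^ p - x ^ p ≤ p * (x + 1) ^ (p - 1) := by
  obtain ⟨c, ⟨hxc, hc1⟩, hslope⟩ := exists_hasDerivAt_eq_slope (fun y => y ^ p)
    (fun y => p * y ^ (p - 1)) (lt_add_one x)
    (continuousOn_id.rpow_const fun _ _ => Or.inr (by linarith))
    (fun _ _ => hasDerivAt_rpow_const (Or.inr hp))
  have hmono : c ^ (p - 1) ≤ (x + 1) ^ (p - 1) := by
    gcongr; linarith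
  simp only [add_sub_cancel_left, div_one] at hslope
  nlinarith

lemma half_rpow_le_rpow_sub_rpow {p u v : ℝ} (hp : 1 ≤ p) (hv : 0 ≤ v) (hvu : 2 * v ≤ u) :
    u ^ p / 2 ≤ u ^ p - v ^ p := by
  have hu : 0 ≤ u := by linarith
  have h2 : (2 : ℝ) ≤ 2 ^ p := by
    simpa using rpow_le_rpow_of_exponent_le (by norm_num : (1 : ℝ) ≤ 2) hp
  have : v ^ p ≤ u ^ p / 2 :=
    calc v ^ p ≤ (u / 2) ^ p := by gcongr; linarith
      _ = u ^ p / 2 ^ p := div_rpow hu (by norm_num) p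
      _ ≤ u ^ p / 2 := by gcongr
  linarith

lemma rpow_mul_rpow_mul_rpow_le {p u v w : ℝ} (hp : 1 ≤ p) (hw : 0 < w) (hwu : w ≤ u)
    (hv : 0 ≤ v) (hvw : v ≤ 2 * w) :
    u ^ (1 - p) * v ^ (3 * p - 3) * w ^ (2 - 2 * p) ≤ 2 ^ (3 * p - 3) := by
  have hu : 0 < u := hw.trans_le hwu
  calc u ^ (1 - p) * v ^ (3 * p - 3) * w ^ (2 - 2 * p)
      ≤ u ^ (1 - p) * (2 * w) ^ (3 * p - 3) * w ^ (2 - 2 * p) := by gcongr; linarith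
    _ = 2 ^ (3 * p - 3) * (u ^ (1 - p) * w ^ (p - 1)) := by
      rw [mul_rpow (by norm_num) hw.le,
        show p - 1 = (3 * p - 3) + (2 - 2 * p) by ring, rpow_add hw]
      ring
    _ ≤ 2 ^ (3 * p - 3) * (u ^ (1 - p) * u ^ (p - 1)) := by gcongr
    _ = 2 ^ (3 * p - 3) := by rw [← rpow_add hu]; simp

end Real

noncomputable def firstSumTerm (α x y z : ℝ) : ℝ := α * x ^ (α - 1) * y ^ 3 * z ^ (2 * α - 2)

noncomputable def firstSumConst (α : ℝ) : ℝ := 2 ^ (1 - α) * (1 / α) ^ 2 * 2 ^ (3 * (1 / α) - 3)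

lemma firstSumConst_pos {α : ℝ} (hα : 0 < α) : 0 < firstSumConst α := by
  unfold firstSumConst; positivity

lemma firstSumTerm_le_of_scale {α a c x y z : ℝ} (hα0 : 0 < α) (hα1 : α ≤ 1) (ha : 0 ≤ a)
    (hc : 0 < c) (hx : 0 < x) (hy : 0 ≤ y) (hz : 0 < z) :
    firstSumTerm α (c * x) (c * y) (a + c * z) ≤ c ^ (3 * α) * firstSumTerm α x y z := by
  have hcz : (a + c * z) ^ (2 * α - 2) ≤ (c * z) ^ (2 * α - 2) :=
    rpow_le_rpow_of_nonpos (by positivity) (by linarith) (by linarith)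
  calc firstSumTerm α (c * x) (c * y) (a + c * z)
      ≤ α * (c * x) ^ (α - 1) * (c * y) ^ 3 * (c * z) ^ (2 * α - 2) := by
        unfold firstSumTerm; gcongr
    _ = c ^ ((α - 1) + 3 + (2 * α - 2)) * firstSumTerm α x y z := by
      rw [mul_rpow hc.le hx.le, mul_rpow hc.le hz.le, rpow_add hc, rpow_add hc,
        rpow_ofNat, firstSumTerm]
      ring
    _ = c ^ (3 * α) * firstSumTerm α x y z := by ring_nf

lemma firstSumTerm_rpow_le {α u w : ℝ} (hα0 : 0 < α) (hα1 : α ≤ 1) (hw : 1 ≤ w)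
    (hu : 2 * (w + 1) ≤ u) :
    firstSumTerm α (u ^ (1 / α) - (w + 1) ^ (1 / α)) ((w + 1) ^ (1 / α) - w ^ (1 / α))
        (w ^ (1 / α)) ≤ firstSumConst α := by
  set p := 1 / α with hp_def
  have hp : 1 ≤ p := by rw [hp_def, le_div_iff₀ hα0]; linarith
  have hαp : α * p = 1 := by rw [hp_def]; field_simp
  have hu0 : 0 < u := by linarith
  have hgap := half_rpow_le_rpow_sub_rpow hp (by linarith) hu
  have hX : (u ^ p - (w + 1) ^ p) ^ (α - 1) ≤ 2 ^ (1 - α) * u ^ (1 - p) :=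
    calc (u ^ p - (w + 1) ^ p) ^ (α - 1) ≤ (u ^ p / 2) ^ (α - 1) :=
          rpow_le_rpow_of_nonpos (by positivity) hgap (by linarith)
      _ = 2 ^ (1 - α) * u ^ (1 - p) := by
        rw [div_rpow (by positivity) (by norm_num), ← rpow_mul hu0.le,
          show 1 - α = -(α - 1) by ring, rpow_neg (by norm_num),
          show p * (α - 1) = 1 - p by linear_combination hαp]
        ring
  have hΔ : 0 ≤ (w + 1) ^ p - w ^ p := sub_nonneg.2 (by gcongr; linarith)
  have hY : ((w + 1) ^ p - w ^ p) ^ 3 ≤ p ^ 3 * (w + 1) ^ (3 * p - 3) :=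
    calc ((w + 1) ^ p - w ^ p) ^ 3 ≤ (p * (w + 1) ^ (p - 1)) ^ 3 := by
          gcongr
          exact rpow_add_one_sub_rpow_le hp (by linarith)
      _ = p ^ 3 * (w + 1) ^ (3 * p - 3) := by
        rw [mul_pow, ← rpow_natCast ((w + 1) ^ (p - 1)) 3, ← rpow_mul (by linarith)]
        push_cast
        ring_nf
  have hZ : (w ^ p) ^ (2 * α - 2) = w ^ (2 - 2 * p) := by
    rw [← rpow_mul (by linarith)]
    congr 1
    linear_combination 2 * hαp
  rw [firstSumConst, ← hp_def]
  calc firstSumTerm α (u ^ p - (w + 1) ^ p) ((w + 1) ^ p - w ^ p) (w ^ p)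
      ≤ α * (2 ^ (1 - α) * u ^ (1 - p)) * (p ^ 3 * (w + 1) ^ (3 * p - 3)) * w ^ (2 - 2 * p) := by
        rw [firstSumTerm, hZ]
        gcongr
    _ = 2 ^ (1 - α) * p ^ 2 * (u ^ (1 - p) * (w + 1) ^ (3 * p - 3) * w ^ (2 - 2 * p)) := by
        linear_combination
          (2 ^ (1 - α) * u ^ (1 - p) * (w + 1) ^ (3 * p - 3) * w ^ (2 - 2 * p) * p ^ 2) * hαp
    _ ≤ 2 ^ (1 - α) * p ^ 2 * 2 ^ (3 * p - 3) := by
        gcongr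
        exact rpow_mul_rpow_mul_rpow_le hp (by linarith) (by linarith) (by linarith)
          (by linarith)

lemma firstSumTerm_graded_le {α a c u w : ℝ} (hα0 : 0 < α) (hα1 : α ≤ 1) (ha : 0 ≤ a)
    (hc : 0 < c) (hw : 1 ≤ w) (hu : 2 * (w + 1) ≤ u) :
    firstSumTerm α ((a + c * u ^ (1 / α)) - (a + c * (w + 1) ^ (1 / α)))
        ((a + c * (w + 1) ^ (1 / α)) - (a + c * w ^ (1 / α))) (a + c * w ^ (1 / α)) ≤
      c ^ (3 * α) * firstSumConst α := by
  have hp : 1 ≤ 1 / α := by rw [le_div_iff₀ hα0]; linarith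
  have hgap := half_rpow_le_rpow_sub_rpow hp (by linarith) hu
  simp only [add_sub_add_left_eq_sub, ← mul_sub]
  refine (firstSumTerm_le_of_scale hα0 hα1 ha hc ?_ ?_ (by positivity)).trans ?_
  · have : 0 < u ^ (1 / α) := rpow_pos_of_pos (by linarith) _
    linarith
  · exact sub_nonneg.2 (by gcongr; linarith)
  · exact mul_le_mul_of_nonneg_left (firstSumTerm_rpow_le hα0 hα1 hw hu) (by positivity)

lemma rpow_neg_le_inv_three {n x : ℝ} (hn : 3 ≤ n) (hx : 1 ≤ x) : n ^ (-x) ≤ 3⁻¹ :=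
  calc n ^ (-x) ≤ n ^ (-1 : ℝ) := rpow_le_rpow_of_exponent_le (by linarith) (by linarith)
    _ = n⁻¹ := rpow_neg_one n
    _ ≤ 3⁻¹ := inv_anti₀ (by norm_num) hn

lemma inv_sub_two_sq_le {n : ℝ} (hn : 3 ≤ n) : ((n - 2) ^ 2)⁻¹ ≤ 9 * n ^ (-2 : ℝ) := by
  rw [rpow_neg (by linarith), rpow_two, ← div_eq_mul_inv, le_div_iff₀ (by positivity),
    inv_mul_le_iff₀ (by nlinarith)]
  nlinarith

lemma exists_mesh_scale {α T : ℝ} (hα0 : 0 < α) (hα1 : α ≤ 1) (hT : 0 < T) {N : ℕ} (hN : 3 ≤ N)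
    {s : ℕ → ℝ}
    (hs : ∀ j : ℕ, 3 ≤ j → j ≤ N →
      s j = s 2 + T * (1 - (N : ℝ) ^ (-(2 / α)) - (N : ℝ) ^ (-(3 / (2 * α)))) *
        (((j : ℝ) - 2) / ((N : ℝ) - 2)) ^ (1 / α)) :
    ∃ c, 0 < c ∧ c ^ (3 * α) ≤ T ^ (3 * α) / ((N : ℝ) - 2) ^ 3 ∧
      ∀ j : ℕ, 3 ≤ j → j ≤ N → s j = s 2 + c * ((j : ℝ) - 2) ^ (1 / α) := by
  set S := 1 - (N : ℝ) ^ (-(2 / α)) - (N : ℝ) ^ (-(3 / (2 * α)))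
  have hN3 : (3 : ℝ) ≤ N := by exact_mod_cast hN
  have hm : 0 < (N : ℝ) - 2 := by linarith
  have hS0 : 0 < S := by
    have h1 := rpow_neg_le_inv_three hN3 (x := 2 / α) (by rw [le_div_iff₀ hα0]; linarith)
    have h2 := rpow_neg_le_inv_three hN3 (x := 3 / (2 * α))
      (by rw [le_div_iff₀ (by positivity)]; linarith)
    linarith
  have hS1 : S ≤ 1 := by
    have : 0 ≤ (N : ℝ) ^ (-(2 / α)) + (N : ℝ) ^ (-(3 / (2 * α))) := by positivity
    linarith
  refine ⟨T * S / ((N : ℝ) - 2) ^ (1 / α), by positivity, ?_, fun j hj3 hjN => ?_⟩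
  · rw [div_rpow (by positivity) (by positivity), ← rpow_mul hm.le,
      show 1 / α * (3 * α) = (3 : ℕ) by field_simp; norm_num, rpow_natCast]
    gcongr
    exact mul_le_of_le_one_right hT.le hS1
  · rw [hs j hj3 hjN, div_rpow (by rify at hj3; linarith) hm.le]
    ring

theorem lemma43_first_sum_general (α T : ℝ) (hα0 : 0 < α) (hα1 : α < 1) (hT : 0 < T)
    (t : ℕ → ℕ → ℝ)
    (ht2 : ∀ N, t N 2 = T * (N : ℝ) ^ (-(2 / α)) + T * (N : ℝ) ^ (-(3 / (2 * α))))
    (htj : ∀ N j : ℕ, 3 ≤ j → j ≤ N →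
      t N j = t N 2 + T * (1 - (N : ℝ) ^ (-(2 / α)) - (N : ℝ) ^ (-(3 / (2 * α)))) *
        (((j : ℝ) - 2) / ((N : ℝ) - 2)) ^ (1 / α)) :
    ∃ C > 0, ∀ N : ℕ, 3 ≤ N → ∀ j : ℕ, 4 ≤ j → j ≤ N →
      ∑ k ∈ Finset.Icc 4 ((j + 1) / 2),
          α * (t N j - t N k) ^ (α - 1) * (t N k - t N (k - 1)) ^ 3 *
            (t N (k - 1)) ^ (2 * α - 2)
        ≤ C * (N : ℝ) ^ (-2 : ℝ) := by
  refine ⟨9 * T ^ (3 * α) * firstSumConst α, by have := firstSumConst_pos hα0; positivity,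
    fun N hN j hj4 hjN => ?_⟩
  obtain ⟨c, hc, hc3, ht⟩ := exists_mesh_scale hα0 hα1.le hT hN (htj N)
  have hN3 : (3 : ℝ) ≤ N := by exact_mod_cast hN
  have ht2 : 0 ≤ t N 2 := by rw [ht2]; positivity
  have hterm : ∀ k ∈ Icc 4 ((j + 1) / 2), firstSumTerm α (t N j - t N k)
      (t N k - t N (k - 1)) (t N (k - 1)) ≤ c ^ (3 * α) * firstSumConst α := by
    intro k hk
    obtain ⟨hk4, hkj⟩ := mem_Icc.1 hk
    have hk3 : ((k - 1 : ℕ) : ℝ) - 2 = (k : ℝ) - 3 := by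
      rw [Nat.cast_sub (by omega)]; ring
    rw [ht j (by omega) hjN, ht k (by omega) (by omega), ht (k - 1) (by omega) (by omega), hk3,
      show (k : ℝ) - 2 = (k : ℝ) - 3 + 1 by ring]
    have hk4' : (4 : ℝ) ≤ k := by exact_mod_cast hk4
    have hkj' : (2 * k : ℝ) ≤ j + 1 := by exact_mod_cast (by omega : 2 * k ≤ j + 1)
    exact firstSumTerm_graded_le hα0 hα1.le ht2 hc (by linarith) (by linarith)
  have hcard : ((Icc 4 ((j + 1) / 2)).card : ℝ) ≤ N - 2 := by
    rw [Nat.card_Icc, le_sub_iff_add_le]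
    exact_mod_cast (by omega : (j + 1) / 2 + 1 - 4 + 2 ≤ N)
  calc ∑ k ∈ Icc 4 ((j + 1) / 2), firstSumTerm α (t N j - t N k) (t N k - t N (k - 1))
        (t N (k - 1))
      ≤ (Icc 4 ((j + 1) / 2)).card • (c ^ (3 * α) * firstSumConst α) :=
        sum_le_card_nsmul _ _ _ hterm
    _ ≤ ((N : ℝ) - 2) * (T ^ (3 * α) / ((N : ℝ) - 2) ^ 3 * firstSumConst α) := by
        rw [nsmul_eq_mul]
        have := firstSumConst_pos hα0
        gcongr
        linarith
    _ = T ^ (3 * α) * firstSumConst α * (((N : ℝ) - 2) ^ 2)⁻¹ := by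
        field_simp
    _ ≤ T ^ (3 * α) * firstSumConst α * (9 * (N : ℝ) ^ (-2 : ℝ)) := by
        have := firstSumConst_pos hα0
        gcongr
        exact inv_sub_two_sq_le hN3
    _ = 9 * T ^ (3 * α) * firstSumConst α * (N : ℝ) ^ (-2 : ℝ) := by ring

theorem lemma43_first_sum (α T : ℝ) (hα0 : 0 < α) (hα1 : α < 1) (hT : 0 < T)
    (t : ℕ → ℕ → ℝ)
    (ht0 : ∀ N, t N 0 = 0)
    (ht1 : ∀ N, t N 1 = T * (N : ℝ) ^ (-(2 / α)))
    (ht2 : ∀ N, t N 2 = T * (N : ℝ) ^ (-(2 / α)) + T * (N : ℝ) ^ (-(3 / (2 * α))))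
    (htj : ∀ N j : ℕ, 3 ≤ j → j ≤ N →
      t N j = t N 2 + T * (1 - (N : ℝ) ^ (-(2 / α)) - (N : ℝ) ^ (-(3 / (2 * α)))) *
        (((j : ℝ) - 2) / ((N : ℝ) - 2)) ^ (1 / α)) :
    ∃ C > 0, ∀ N : ℕ, 3 ≤ N → ∀ j : ℕ, 4 ≤ j → j ≤ N →
      ∑ k ∈ Finset.Icc 4 ((j + 1) / 2),
          α * (t N j - t N k) ^ (α - 1) * (t N k - t N (k - 1)) ^ 3 *
            (t N (k - 1)) ^ (2 * α - 2)
        ≤ C * (N : ℝ) ^ (-2 : ℝ) :=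
  lemma43_first_sum_general α T hα0 hα1 hT t ht2 htj
end

section
/- Let 0 < α < 1 and let 0 = t_0 < t_1 < ⋯ < t_j. Define q_k = (1/Γ(α+2))·{ (1/Δt_k)[(t_j − t_{k-1})^{α+1} − (t_j − t_k)^{α+1}] − (1/Δt_{k+1})[(t_j − t_k)^{α+1} − (t_j − t_{k+1})^{α+1}] } for 1 ≤ k ≤ j−1, where Δt_k = t_k − t_{k-1}. Then each q_k ≥ 0, and Σ_{k=1}^{j−1} q_k = (1/Γ(α+1))·[(t_j − μ_1)^α − (t_j − μ_j)^α] for some points μ_k ∈ (t_{k-1}, t_k); in particular Σ_{k=1}^{j−1} q_k ≤ t_j^α / Γ(α+1). -/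
/-!
By the mean value theorem, each divided difference
`((t_j - t_{k-1})^{α+1} - (t_j - t_k)^{α+1}) / Δt_k` equals `(α + 1) (t_j - μ_k)^α` for some
`μ_k ∈ (t_{k-1}, t_k)`. Since `Γ(α + 2) = (α + 1) Γ(α + 1)`, this gives `q_k = G_k - G_{k+1}` with
`G_k = (t_j - μ_k)^α / Γ(α + 1)`. The points `μ_k` increase and stay below `t_j`, so `G` decreases
(hence `q_k ≥ 0`), the sum telescopes to `G_1 - G_j`, and `0 ≤ G_j`, `G_1 ≤ t_j^α / Γ(α + 1)`.
-/

open Finset Real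

lemma exists_mem_Ioo_slope_sub_rpow_add_one {α : ℝ} (hα : 0 ≤ α) (c : ℝ) {a b : ℝ}
    (hab : a < b) :
    ∃ μ ∈ Set.Ioo a b,
      1 / (b - a) * ((c - a) ^ (α + 1) - (c - b) ^ (α + 1)) = (α + 1) * (c - μ) ^ α := by
  have hp : 1 ≤ α + 1 := by linarith
  have hderiv : ∀ x, HasDerivAt (fun x => (c - x) ^ (α + 1)) (-((α + 1) * (c - x) ^ α)) x := by
    intro x
    convert ((hasDerivAt_id' x).const_sub c).rpow_const (p := α + 1) (Or.inr hp) using 1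
    rw [add_sub_cancel_right]
    ring
  obtain ⟨μ, hμ, hslope⟩ := exists_hasDerivAt_eq_slope _ _ hab
    (fun x _ => (hderiv x).continuousAt.continuousWithinAt) (fun x _ => hderiv x)
  refine ⟨μ, hμ, ?_⟩
  rw [one_div_mul_eq_div, ← neg_sub ((c - b) ^ (α + 1)), neg_div, ← hslope, neg_neg]

lemma one_div_Gamma_add_two_mul_sub {α : ℝ} (hα : -1 < α) (x y : ℝ) :
    1 / Gamma (α + 2) * ((α + 1) * x - (α + 1) * y) = x / Gamma (α + 1) - y / Gamma (α + 1) := by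
  have hα1 : α + 1 ≠ 0 := by linarith
  have hΓ : Gamma (α + 1) ≠ 0 := (Gamma_pos_of_pos (by linarith)).ne'
  rw [show α + 2 = α + 1 + 1 by ring, Gamma_add_one (by linarith)]
  field_simp

lemma sum_Icc_one_eq_sub_of_eq_sub_succ {M : Type*} [AddCommGroup M] {f g : ℕ → M} {n : ℕ}
    (hn : 1 ≤ n) (hfg : ∀ k, 1 ≤ k → k ≤ n - 1 → f k = g k - g (k + 1)) :
    ∑ k ∈ Icc 1 (n - 1), f k = g 1 - g n := by
  calc ∑ k ∈ Icc 1 (n - 1), f k = -∑ k ∈ Icc 1 (n - 1), (g (k + 1) - g k) := by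
        rw [← sum_neg_distrib]
        exact sum_congr rfl fun k hk => by rw [hfg k (mem_Icc.1 hk).1 (mem_Icc.1 hk).2, neg_sub]
    _ = g 1 - g n := by
        rw [← Ico_add_one_right_eq_Icc, Nat.sub_add_cancel hn, sum_Ico_sub g hn, neg_sub]

theorem quadrature_weights_telescope_general (α : ℝ) (hα0 : 0 < α)
    (j : ℕ) (hj : 2 ≤ j) (t : ℕ → ℝ) (ht0 : t 0 = 0)
    (hmono : ∀ k : ℕ, 1 ≤ k → k ≤ j → t (k - 1) < t k)
    (q : ℕ → ℝ)
    (hq : ∀ k : ℕ, 1 ≤ k → k ≤ j - 1 →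
      q k = (1 / Real.Gamma (α + 2)) *
        ((1 / (t k - t (k - 1))) * ((t j - t (k - 1)) ^ (α + 1) - (t j - t k) ^ (α + 1)) -
         (1 / (t (k + 1) - t k)) * ((t j - t k) ^ (α + 1) - (t j - t (k + 1)) ^ (α + 1)))) :
    (∀ k : ℕ, 1 ≤ k → k ≤ j - 1 → 0 ≤ q k) ∧
    ∃ μ : ℕ → ℝ, (∀ k : ℕ, 1 ≤ k → k ≤ j → μ k ∈ Set.Ioo (t (k - 1)) (t k)) ∧
      ∑ k ∈ Finset.Icc 1 (j - 1), q k =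
        (1 / Real.Gamma (α + 1)) * ((t j - μ 1) ^ α - (t j - μ j) ^ α) ∧
      ∑ k ∈ Finset.Icc 1 (j - 1), q k ≤ t j ^ α / Real.Gamma (α + 1) := by
  have hΓ : 0 < Gamma (α + 1) := Gamma_pos_of_pos (by linarith)
  have ht : MonotoneOn t (Set.Iic j) := monotoneOn_of_le_add_one Set.ordConnected_Iic
    fun k _ _ hk => by simpa using (hmono (k + 1) (by omega) hk).le
  choose! μ hμ hslope using fun k (hk : 1 ≤ k ∧ k ≤ j) =>
    exists_mem_Ioo_slope_sub_rpow_add_one hα0.le (t j) (hmono k hk.1 hk.2)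
  have hμ_lt : ∀ k, 1 ≤ k → k ≤ j → μ k < t j := fun k hk1 hkj =>
    (hμ k ⟨hk1, hkj⟩).2.trans_le (ht (Set.mem_Iic.2 hkj) (Set.mem_Iic.2 le_rfl) hkj)
  set G : ℕ → ℝ := fun k => (t j - μ k) ^ α / Gamma (α + 1)
  have hqG : ∀ k, 1 ≤ k → k ≤ j - 1 → q k = G k - G (k + 1) := by
    intro k hk1 hkj
    have hnext := hslope (k + 1) ⟨by omega, by omega⟩
    rw [Nat.add_sub_cancel] at hnext
    rw [hq k hk1 hkj, hslope k ⟨hk1, by omega⟩, hnext,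
      one_div_Gamma_add_two_mul_sub (by linarith)]
  have hG_anti : ∀ k, 1 ≤ k → k ≤ j - 1 → G (k + 1) ≤ G k := by
    intro k hk1 hkj
    have hμk := (hμ k ⟨hk1, by omega⟩).2
    have hμk1 := (hμ (k + 1) ⟨by omega, by omega⟩).1
    rw [Nat.add_sub_cancel] at hμk1
    have := hμ_lt (k + 1) (by omega) (by omega)
    dsimp only [G]
    gcongr; linarith
  have hsum := sum_Icc_one_eq_sub_of_eq_sub_succ (by omega) hqG
  refine ⟨fun k hk1 hkj => hqG k hk1 hkj ▸ sub_nonneg.2 (hG_anti k hk1 hkj), μ,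
    fun k hk1 hkj => hμ k ⟨hk1, hkj⟩, by rw [hsum]; ring, ?_⟩
  have hμ1 := (hμ 1 ⟨le_rfl, by omega⟩).1
  rw [Nat.sub_self, ht0] at hμ1
  have := hμ_lt 1 le_rfl (by omega)
  have := hμ_lt j (by omega) le_rfl
  calc ∑ k ∈ Icc 1 (j - 1), q k = G 1 - G j := hsum
    _ ≤ G 1 := sub_le_self _ (div_nonneg (rpow_nonneg (by linarith) α) hΓ.le)
    _ ≤ t j ^ α / Gamma (α + 1) := by dsimp only [G]; gcongr; linarith

theorem quadrature_weights_telescope (α : ℝ) (hα0 : 0 < α) (hα1 : α < 1)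
    (j : ℕ) (hj : 2 ≤ j) (t : ℕ → ℝ) (ht0 : t 0 = 0)
    (hmono : ∀ k : ℕ, 1 ≤ k → k ≤ j → t (k - 1) < t k)
    (q : ℕ → ℝ)
    (hq : ∀ k : ℕ, 1 ≤ k → k ≤ j - 1 →
      q k = (1 / Real.Gamma (α + 2)) *
        ((1 / (t k - t (k - 1))) * ((t j - t (k - 1)) ^ (α + 1) - (t j - t k) ^ (α + 1)) -
         (1 / (t (k + 1) - t k)) * ((t j - t k) ^ (α + 1) - (t j - t (k + 1)) ^ (α + 1)))) :
    (∀ k : ℕ, 1 ≤ k → k ≤ j - 1 → 0 ≤ q k) ∧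
    ∃ μ : ℕ → ℝ, (∀ k : ℕ, 1 ≤ k → k ≤ j → μ k ∈ Set.Ioo (t (k - 1)) (t k)) ∧
      ∑ k ∈ Finset.Icc 1 (j - 1), q k =
        (1 / Real.Gamma (α + 1)) * ((t j - μ 1) ^ α - (t j - μ j) ^ α) ∧
      ∑ k ∈ Finset.Icc 1 (j - 1), q k ≤ t j ^ α / Real.Gamma (α + 1) :=
  quadrature_weights_telescope_general α hα0 j hj t ht0 hmono q hq
end
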